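/- Let m ≥ 1, let O ⊆ ℝ^m be a nonempty open convex set, let ω : O → ℝ be convex and differentiable, let α > 0 satisfy ω(x) − ω(y) − ⟨∇ω(y), x − y⟩ ≥ (α/2)‖x − y‖² for all x, y ∈ X, where X ⊆ O is a nonempty compact convex set, and let Θ ∈ ℝ satisfy D_ω(u,v) ≤ Θ for all u, v ∈ X. Let (x_k)_{k≥1} be a sequence in X, (E_k)_{k≥1} a sequence in ℝ^m, and (t_k)_{k≥1} a sequence of positive reals such that for every k ≥ 1 the point x_{k+1} minimizes u ↦ ⟨t_k E_k − ∇ω(x_k), u⟩ + ω(u) over X. Then for all positive integers i ≤ j and every u ∈ X: Σ_{k=i}^{j} t_k ⟨E_k, x_k − u⟩ ≤ Θ + (1/(2α)) Σ_{k=i}^{j} t_k² ‖E_k‖². -/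

import Mathlib

/-!
Each comirror step is a mirror-descent step: the first-order optimality condition for `x (k + 1)`
together with the three-point identity for Bregman distances gives
`t⟪E, x (k + 1) - u⟫ ≤ D(u, x k) - D(u, x (k + 1)) - D(x (k + 1), x k)`, and strong convexity
bounds `D(x (k + 1), x k)` from below by `α/2 ‖x k - x (k + 1)‖²`, which absorbs the remaining
term `t⟪E, x k - x (k + 1)⟫` up to `t² ‖E‖² / (2α)` (Peter–Paul). Summing, the Bregman terms
telescope to at most `D(u, x i) ≤ Θ`.
-/

open scoped RealInnerProductSpace

/-- The Bregman distance associated to a differentiable function `ω`. -/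
noncomputable def bregman {m : ℕ} (ω : EuclideanSpace ℝ (Fin m) → ℝ)
    (u v : EuclideanSpace ℝ (Fin m)) : ℝ :=
  ω u - ω v - ⟪gradient ω v, u - v⟫

section InnerProductSpace

variable {F : Type*} [NormedAddCommGroup F] [InnerProductSpace ℝ F]

theorem real_inner_le_half_mul_norm_sq_add_div {α : ℝ} (hα : 0 < α) (v w : F) :
    ⟪v, w⟫ ≤ α / 2 * ‖w‖ ^ 2 + ‖v‖ ^ 2 / (2 * α) := by
  rw [← sub_le_iff_le_add', le_div_iff₀ (by positivity)]
  nlinarith [real_inner_le_norm v w, sq_nonneg (‖v‖ - α * ‖w‖)]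

variable [CompleteSpace F]

theorem HasGradientAt.const_inner_add {f : F → ℝ} {G p : F} (hf : HasGradientAt f G p) (a : F) :
    HasGradientAt (fun v => ⟪a, v⟫ + f v) (a + G) p := by
  rw [hasGradientAt_iff_hasFDerivAt, map_add] at *
  exact (InnerProductSpace.toDual ℝ F a).hasFDerivAt.add hf

theorem IsMinOn.inner_gradient_sub_nonneg {f : F → ℝ} {s : Set F} {G p u : F}
    (hmin : IsMinOn f s p) (hf : HasGradientAt f G p) (hs : Convex ℝ s) (hp : p ∈ s)
    (hu : u ∈ s) : 0 ≤ ⟪G, u - p⟫ := by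
  simpa using hmin.localize.hasFDerivWithinAt_nonneg hf.hasFDerivAt.hasFDerivWithinAt
    (sub_mem_posTangentConeAt_of_segment_subset (hs.segment_subset hp hu))

end InnerProductSpace

theorem Finset.sum_Icc_le_sub_add_sum {M : Type*} [AddCommGroup M] [PartialOrder M]
    [IsOrderedAddMonoid M] {a c d : ℕ → M} {i j : ℕ} (hij : i ≤ j)
    (h : ∀ k ∈ Finset.Icc i j, a k ≤ d k - d (k + 1) + c k) :
    ∑ k ∈ Finset.Icc i j, a k ≤ d i - d (j + 1) + ∑ k ∈ Finset.Icc i j, c k := by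
  refine (Finset.sum_le_sum h).trans_eq ?_
  simp only [Finset.sum_add_distrib, ← neg_sub (d (_ + 1)), Finset.sum_neg_distrib,
    Finset.sum_Icc_sub hij]

section Bregman

variable {m : ℕ} {ω : EuclideanSpace ℝ (Fin m) → ℝ}

theorem bregman_three_point (u x p : EuclideanSpace ℝ (Fin m)) :
    bregman ω u x - bregman ω u p = bregman ω p x + ⟪gradient ω p - gradient ω x, u - p⟫ := by
  simp only [bregman, inner_sub_left, inner_sub_right]
  ring

theorem mirror_step_inner_le {X : Set (EuclideanSpace ℝ (Fin m))} {α t : ℝ}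
    {E x p u : EuclideanSpace ℝ (Fin m)} (hX : Convex ℝ X) (hα : 0 < α) (hp : p ∈ X)
    (hu : u ∈ X) (hω : DifferentiableAt ℝ ω p)
    (hstrong : α / 2 * ‖p - x‖ ^ 2 ≤ bregman ω p x)
    (hmin : IsMinOn (fun v => ⟪t • E - gradient ω x, v⟫ + ω v) X p) :
    t * ⟪E, x - u⟫ ≤ bregman ω u x - bregman ω u p + t ^ 2 * ‖E‖ ^ 2 / (2 * α) := by
  have hopt : 0 ≤ ⟪t • E - gradient ω x + gradient ω p, u - p⟫ :=
    hmin.inner_gradient_sub_nonneg (hω.hasGradientAt.const_inner_add _) hX hp hu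
  have hyoung := real_inner_le_half_mul_norm_sq_add_div hα (t • E) (x - p)
  rw [norm_smul, mul_pow, Real.norm_eq_abs, sq_abs, norm_sub_rev] at hyoung
  have hsplit : t * ⟪E, x - u⟫ = ⟪t • E, x - p⟫ - ⟪t • E - gradient ω x + gradient ω p, u - p⟫
      + ⟪gradient ω p - gradient ω x, u - p⟫ := by
    simp only [inner_add_left, inner_sub_left, inner_sub_right, real_inner_smul_left]
    ring
  rw [hsplit, bregman_three_point]
  linarith

end Bregman

theorem comirror_key_lemma_general {m : ℕ}
    (O : Set (EuclideanSpace ℝ (Fin m)))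
    (ω : EuclideanSpace ℝ (Fin m) → ℝ)
    (hωdiff : ∀ x ∈ O, DifferentiableAt ℝ ω x)
    (X : Set (EuclideanSpace ℝ (Fin m)))
    (hXconv : Convex ℝ X) (hXO : X ⊆ O)
    (α : ℝ) (hα : 0 < α)
    (hstrong : ∀ x ∈ X, ∀ y ∈ X,
      ω x - ω y - ⟪gradient ω y, x - y⟫ ≥ α / 2 * ‖x - y‖ ^ 2)
    (Θ : ℝ) (hΘ : ∀ u ∈ X, ∀ v ∈ X, bregman ω u v ≤ Θ)
    (x : ℕ → EuclideanSpace ℝ (Fin m)) (hx : ∀ k, 1 ≤ k → x k ∈ X)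
    (E : ℕ → EuclideanSpace ℝ (Fin m))
    (t : ℕ → ℝ)
    (hmin : ∀ k, 1 ≤ k → ∀ u ∈ X,
      ⟪t k • E k - gradient ω (x k), x (k + 1)⟫ + ω (x (k + 1)) ≤
        ⟪t k • E k - gradient ω (x k), u⟫ + ω u) :
    ∀ i j : ℕ, 1 ≤ i → i ≤ j → ∀ u ∈ X,
      ∑ k ∈ Finset.Icc i j, t k * ⟪E k, x k - u⟫ ≤
        Θ + 1 / (2 * α) * ∑ k ∈ Finset.Icc i j, t k ^ 2 * ‖E k‖ ^ 2 := by
  intro i j hi hij u hu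
  have hstep : ∀ k ∈ Finset.Icc i j, t k * ⟪E k, x k - u⟫ ≤
      bregman ω u (x k) - bregman ω u (x (k + 1)) + t k ^ 2 * ‖E k‖ ^ 2 / (2 * α) := by
    intro k hk
    have hk : 1 ≤ k := hi.trans (Finset.mem_Icc.1 hk).1
    have hp : x (k + 1) ∈ X := hx (k + 1) (by omega)
    exact mirror_step_inner_le hXconv hα hp hu (hωdiff _ (hXO hp)) (hstrong _ hp _ (hx k hk))
      (isMinOn_iff.2 (hmin k hk))
  have hlast : 0 ≤ bregman ω u (x (j + 1)) :=
    (by positivity : 0 ≤ α / 2 * ‖u - x (j + 1)‖ ^ 2).trans (hstrong _ hu _ (hx _ (by omega)))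
  calc _ ≤ bregman ω u (x i) - bregman ω u (x (j + 1)) +
        ∑ k ∈ Finset.Icc i j, t k ^ 2 * ‖E k‖ ^ 2 / (2 * α) :=
        Finset.sum_Icc_le_sub_add_sum hij hstep
    _ ≤ Θ + 1 / (2 * α) * ∑ k ∈ Finset.Icc i j, t k ^ 2 * ‖E k‖ ^ 2 := by
        rw [← Finset.sum_div, one_div_mul_eq_div]
        linarith [hΘ u hu (x i) (hx i hi)]

theorem comirror_key_lemma {m : ℕ} (hm : 1 ≤ m)
    (O : Set (EuclideanSpace ℝ (Fin m))) (hOne : O.Nonempty) (hOopen : IsOpen O)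
    (hOconv : Convex ℝ O)
    (ω : EuclideanSpace ℝ (Fin m) → ℝ) (hωconv : ConvexOn ℝ O ω)
    (hωdiff : ∀ x ∈ O, DifferentiableAt ℝ ω x)
    (X : Set (EuclideanSpace ℝ (Fin m))) (hXne : X.Nonempty) (hXcpt : IsCompact X)
    (hXconv : Convex ℝ X) (hXO : X ⊆ O)
    (α : ℝ) (hα : 0 < α)
    (hstrong : ∀ x ∈ X, ∀ y ∈ X,
      ω x - ω y - ⟪gradient ω y, x - y⟫ ≥ α / 2 * ‖x - y‖ ^ 2)
    (Θ : ℝ) (hΘ : ∀ u ∈ X, ∀ v ∈ X, bregman ω u v ≤ Θ)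
    (x : ℕ → EuclideanSpace ℝ (Fin m)) (hx : ∀ k, 1 ≤ k → x k ∈ X)
    (E : ℕ → EuclideanSpace ℝ (Fin m))
    (t : ℕ → ℝ) (ht : ∀ k, 1 ≤ k → 0 < t k)
    (hmin : ∀ k, 1 ≤ k → ∀ u ∈ X,
      ⟪t k • E k - gradient ω (x k), x (k + 1)⟫ + ω (x (k + 1)) ≤
        ⟪t k • E k - gradient ω (x k), u⟫ + ω u) :
    ∀ i j : ℕ, 1 ≤ i → i ≤ j → ∀ u ∈ X,
      ∑ k ∈ Finset.Icc i j, t k * ⟪E k, x k - u⟫ ≤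
        Θ + 1 / (2 * α) * ∑ k ∈ Finset.Icc i j, t k ^ 2 * ‖E k‖ ^ 2 :=
  comirror_key_lemma_general O ω hωdiff X hXconv hXO α hα hstrong Θ hΘ x hx E t hmin
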